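/- Let n ≥ 1 and m, p, d be integers with n ≤ m ≤ p and q := d − p ≥ m, and let t be a real number. Then (1/m) Σ_{h=1}^{n} Σ_{j=0}^{h−1} Σ_{k=j}^{j+n−h} (−1)^k F(m,p,d,n,h,j,k) e^{−ht − t h(h−2j−1)/d} = Σ_{h=1}^{n} (e^{−ht − t h(h−1)/d}/n!) C(n,h) Σ_{k=0}^{n−h} Σ_{j=0}^{h−1} (−1)^{n−h−k+j} C(n−h,k) C(h−1,j) F̃(m,p,d,n,h,j,k) e^{2thj/d}, where F(m,p,d,n,h,j,k) = [Γ(d+h−j)Γ(n−k+m)Γ(d−j−k−1)Γ(p+n−k)Γ(q+h−j)(d+2h−2j−1)(d−2j−1)Γ(p−j)] / [(n−k−h+j)! (k−j)! j! Γ(d+n−k+h−j) Γ(p+h−j) Γ(h−j) h (d+h−2j−1) Γ(m−k) Γ(p−k) Γ(q−j) Γ(d−j)] and F̃(m,p,d,n,h,j,k) = [(d−2j−1)(d+2h−2j−1)(d−j)_h(d−p−j)_h(m+h−n−j+k)_n(p+h−n−j+k)_n] / [m (d+h−2j−1)(p−j)_h(d−n+h−2j−1+k)_{n+h+1}]. 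-/

import Mathlib

/-!
Terms with the same `h` and `j` are matched, the index `k` on the left corresponding to
`i = j + n - h - k` on the right. Since `Γ(a + n) = (a)_n Γ(a)` for `a > 0`, every quotient of
Gamma values in `F` is a rising factorial, and the factorials left over are exactly those of
`n! = C(n,h) C(n-h,i) C(h-1,j) · h · i! (n-h-i)! j! (h-1-j)!`.
-/

/-- Rising factorial of a real number: `(a)_m = a (a+1) ⋯ (a+m−1)`, with `(a)_0 = 1`. -/
noncomputable def rfr (a : ℝ) (m : ℕ) : ℝ := ∏ i ∈ Finset.range m, (a + (i : ℝ))

open Finset Real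
open scoped Nat

theorem rfr_pos {a : ℝ} (ha : 0 < a) (n : ℕ) : 0 < rfr a n :=
  prod_pos fun i _ => by positivity

theorem Real.Gamma_add_nat_eq_rfr_mul {a : ℝ} (ha : ∀ k : ℕ, a ≠ -k) (n : ℕ) :
    Gamma (a + n) = rfr a n * Gamma a := by
  induction n with
  | zero => simp [rfr]
  | succ n ih =>
    have hn : a + n ≠ 0 := fun h => ha n (by linarith)
    rw [Nat.cast_succ, ← add_assoc, Gamma_add_one hn, ih, rfr, rfr, prod_range_succ]
    ring

theorem Real.Gamma_eq_rfr_mul_of_pos {a b : ℝ} (ha : 0 < a) (n : ℕ) (hb : b = a + n) :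
    Gamma b = rfr a n * Gamma a :=
  hb ▸ Gamma_add_nat_eq_rfr_mul (fun k => ((neg_nonpos.2 k.cast_nonneg).trans_lt ha).ne') n

theorem Nat.choose_mul_choose_mul_choose_mul_factorials {n h i j : ℕ} (hi : i + h ≤ n)
    (hj : j < h) :
    n.choose h * (n - h).choose i * (h - 1).choose j *
      (h * (i ! * (n - h - i)! * (j ! * (h - 1 - j)!))) = n ! := by
  have hn := choose_mul_factorial_mul_factorial (show h ≤ n by omega)
  have hnh := choose_mul_factorial_mul_factorial (show i ≤ n - h by omega)
  have hh := choose_mul_factorial_mul_factorial (show j ≤ h - 1 by omega)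
  have hfac : h ! = h * (h - 1)! := (mul_factorial_pred (by omega)).symm
  rw [← hn, ← hnh, hfac, ← hh]
  ring

noncomputable def coeffF (m p d n h j k : ℕ) : ℝ :=
  (Gamma ((d : ℝ) + h - j) * Gamma ((n : ℝ) - k + m) *
      Gamma ((d : ℝ) - j - k - 1) * Gamma ((p : ℝ) + n - k) *
      Gamma ((d : ℝ) - p + h - j) *
      ((d : ℝ) + 2 * h - 2 * j - 1) * ((d : ℝ) - 2 * j - 1) * Gamma ((p : ℝ) - j)) /
    (((n + j - (k + h)).factorial : ℝ) * ((k - j).factorial : ℝ) * (j.factorial : ℝ) *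
      Gamma ((d : ℝ) + n - k + h - j) * Gamma ((p : ℝ) + h - j) *
      Gamma ((h : ℝ) - j) * (h : ℝ) * ((d : ℝ) + h - 2 * j - 1) *
      Gamma ((m : ℝ) - k) * Gamma ((p : ℝ) - k) *
      Gamma ((d : ℝ) - p - j) * Gamma ((d : ℝ) - j))

noncomputable def coeffFTilde (m p d n h j k : ℕ) : ℝ :=
  (((d : ℝ) - 2 * j - 1) * ((d : ℝ) + 2 * h - 2 * j - 1) *
      rfr ((d : ℝ) - j) h * rfr ((d : ℝ) - p - j) h *
      rfr ((m : ℝ) + h - n - j + k) n * rfr ((p : ℝ) + h - n - j + k) n) /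
    ((m : ℝ) * ((d : ℝ) + h - 2 * j - 1) * rfr ((p : ℝ) - j) h *
      rfr ((d : ℝ) - n + h - 2 * j - 1 + k) (n + h + 1))

theorem coeffF_mul_factorials {m p d n h j k i : ℕ} (hnm : n ≤ m) (hmp : m ≤ p)
    (hpd : p + m ≤ d) (hjh : j < h) (hjk : j ≤ k) (hik : i + k + h = n + j) :
    coeffF m p d n h j k * (h * (i ! * (n - h - i)! * (j ! * (h - 1 - j)!))) =
      m * coeffFTilde m p d n h j i := by
  have hi : n + j - (k + h) = i := by omega
  have hk : k - j = n - h - i := by omega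
  have hhj : (h : ℝ) - j = (h - 1 - j : ℕ) + 1 := by
    rw [Nat.cast_sub (by omega), Nat.cast_sub (by omega)]; push_cast; ring
  replace hjh : j + 1 ≤ h := hjh
  rify at hnm hmp hpd hjh hjk hik
  have hi0 : (0 : ℝ) ≤ i := i.cast_nonneg
  have hdj : (0 : ℝ) < d - j := by linarith
  have hmk : (0 : ℝ) < m - k := by linarith
  have hdjk : (0 : ℝ) < d - j - k - 1 := by linarith
  have hpk : (0 : ℝ) < p - k := by linarith
  have hdpj : (0 : ℝ) < d - p - j := by linarith
  have hpj : (0 : ℝ) < p - j := by linarith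
  have hdhj : (0 : ℝ) < d + h - 2 * j - 1 := by linarith
  have hm : (0 : ℝ) < m := by linarith
  have hh : (0 : ℝ) < h := by linarith
  rw [coeffF, coeffFTilde, hi, hk, hhj, Gamma_nat_eq_factorial,
    Gamma_eq_rfr_mul_of_pos (b := d + h - j) hdj h (by ring),
    Gamma_eq_rfr_mul_of_pos (b := n - k + m) hmk n (by ring),
    Gamma_eq_rfr_mul_of_pos (b := d + n - k + h - j) hdjk (n + h + 1) (by push_cast; ring),
    Gamma_eq_rfr_mul_of_pos (b := p + n - k) hpk n (by ring),
    Gamma_eq_rfr_mul_of_pos (b := d - p + h - j) hdpj h (by ring),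
    Gamma_eq_rfr_mul_of_pos (b := p + h - j) hpj h (by ring),
    show (m : ℝ) + h - n - j + i = m - k by linarith,
    show (p : ℝ) + h - n - j + i = p - k by linarith,
    show (d : ℝ) - n + h - 2 * j - 1 + i = d - j - k - 1 by linarith]
  field_simp [(Gamma_pos_of_pos hdj).ne', (Gamma_pos_of_pos hmk).ne',
    (Gamma_pos_of_pos hdjk).ne', (Gamma_pos_of_pos hpk).ne', (Gamma_pos_of_pos hdpj).ne',
    (Gamma_pos_of_pos hpj).ne',
    (rfr_pos hdj h).ne', (rfr_pos hmk n).ne', (rfr_pos hdjk (n + h + 1)).ne', (rfr_pos hpk n).ne',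
    (rfr_pos hdpj h).ne', (rfr_pos hpj h).ne', hdhj.ne', hm.ne', hh.ne']

theorem coeffF_term_eq_coeffFTilde_term {m p d n h j k i : ℕ} (hnm : n ≤ m) (hmp : m ≤ p)
    (hpd : p + m ≤ d) (hjh : j < h) (hjk : j ≤ k) (hik : i + k + h = n + j) (t : ℝ) :
    1 / (m : ℝ) * ((-1 : ℝ) ^ k * coeffF m p d n h j k *
        exp (-((h : ℝ) * t) - t * h * ((h : ℝ) - 2 * j - 1) / d)) =
      exp (-((h : ℝ) * t) - t * h * ((h : ℝ) - 1) / d) / (n ! : ℝ) * (n.choose h : ℝ) *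
        ((-1 : ℝ) ^ (n - h - i + j) * ((n - h).choose i : ℝ) * ((h - 1).choose j : ℝ) *
          coeffFTilde m p d n h j i * exp (2 * t * h * j / d)) := by
  have hF := coeffF_mul_factorials hnm hmp hpd hjh hjk hik
  have hC : ((n.choose h * (n - h).choose i * (h - 1).choose j *
      (h * (i ! * (n - h - i)! * (j ! * (h - 1 - j)!))) : ℕ) : ℝ) = n ! :=
    congrArg _ (Nat.choose_mul_choose_mul_choose_mul_factorials (by omega) hjh)
  have hexp : exp (-((h : ℝ) * t) - t * h * ((h : ℝ) - 2 * j - 1) / d) =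
      exp (-((h : ℝ) * t) - t * h * ((h : ℝ) - 1) / d) * exp (2 * t * h * j / d) := by
    rw [← exp_add]; congr 1; ring
  have hm : (m : ℝ) ≠ 0 := Nat.cast_ne_zero.2 (by omega)
  have hh : (h : ℝ) ≠ 0 := Nat.cast_ne_zero.2 (by omega)
  have hc1 : (n.choose h : ℝ) ≠ 0 := Nat.cast_ne_zero.2 (Nat.choose_pos (by omega)).ne'
  have hc2 : ((n - h).choose i : ℝ) ≠ 0 := Nat.cast_ne_zero.2 (Nat.choose_pos (by omega)).ne'
  have hc3 : ((h - 1).choose j : ℝ) ≠ 0 := Nat.cast_ne_zero.2 (Nat.choose_pos (by omega)).ne'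
  push_cast at hC
  rw [show n - h - i + j = k by omega, hexp, ← hC]
  field_simp
  linear_combination hF

theorem stmt_1 (n m p d : ℕ) (hnm : n ≤ m) (hmp : m ≤ p) (hq : m ≤ d - p)
    (t : ℝ) :
    (1 / (m : ℝ)) * ∑ h ∈ Finset.Icc 1 n, ∑ j ∈ Finset.range h,
      ∑ k ∈ Finset.Icc j (j + n - h),
        (-1 : ℝ) ^ k *
          ((Real.Gamma ((d : ℝ) + h - j) * Real.Gamma ((n : ℝ) - k + m) *
              Real.Gamma ((d : ℝ) - j - k - 1) * Real.Gamma ((p : ℝ) + n - k) *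
              Real.Gamma ((d : ℝ) - p + h - j) *
              ((d : ℝ) + 2 * h - 2 * j - 1) * ((d : ℝ) - 2 * j - 1) * Real.Gamma ((p : ℝ) - j)) /
            (((n + j - (k + h)).factorial : ℝ) * ((k - j).factorial : ℝ) * (j.factorial : ℝ) *
              Real.Gamma ((d : ℝ) + n - k + h - j) * Real.Gamma ((p : ℝ) + h - j) *
              Real.Gamma ((h : ℝ) - j) * (h : ℝ) * ((d : ℝ) + h - 2 * j - 1) *
              Real.Gamma ((m : ℝ) - k) * Real.Gamma ((p : ℝ) - k) *
              Real.Gamma ((d : ℝ) - p - j) * Real.Gamma ((d : ℝ) - j))) *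
          Real.exp (-((h : ℝ) * t) - t * (h : ℝ) * ((h : ℝ) - 2 * j - 1) / d)
    = ∑ h ∈ Finset.Icc 1 n,
        (Real.exp (-((h : ℝ) * t) - t * (h : ℝ) * ((h : ℝ) - 1) / d) / (n.factorial : ℝ)) *
          (n.choose h : ℝ) *
          ∑ k ∈ Finset.range (n - h + 1), ∑ j ∈ Finset.range h,
            (-1 : ℝ) ^ (n - h - k + j) * ((n - h).choose k : ℝ) * ((h - 1).choose j : ℝ) *
              ((((d : ℝ) - 2 * j - 1) * ((d : ℝ) + 2 * h - 2 * j - 1) *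
                  rfr ((d : ℝ) - j) h * rfr ((d : ℝ) - p - j) h *
                  rfr ((m : ℝ) + h - n - j + k) n * rfr ((p : ℝ) + h - n - j + k) n) /
                ((m : ℝ) * ((d : ℝ) + h - 2 * j - 1) * rfr ((p : ℝ) - j) h *
                  rfr ((d : ℝ) - n + h - 2 * j - 1 + k) (n + h + 1))) *
              Real.exp (2 * t * (h : ℝ) * (j : ℝ) / d) := by
  simp only [mul_sum]
  refine sum_congr rfl fun h hh => ?_
  rw [mem_Icc] at hh
  rw [sum_comm]
  refine sum_congr rfl fun j hj => ?_
  rw [mem_range] at hj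
  refine (sum_nbij' (fun i => j + (n - h) - i) (fun k => j + (n - h) - k) ?_ ?_ ?_ ?_
    fun i hi => ?_).symm
  iterate 4 intro a ha; simp only [mem_range, mem_Icc] at ha ⊢; omega
  rw [mem_range] at hi
  exact (coeffF_term_eq_coeffFTilde_term hnm hmp (by omega) hj (by omega) (by omega) t).symm
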